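/- Let E0 and E1 be filters with support intervals [−r0, r0] and [−r1−1, r1−1] respectively, and let S(z) be a filter with support interval [−t, t−1], t ≥ 1. If r1 ≤ r0 + 2t − 2, then E1'(z) = E1(z) + S(z^2)·E0(z) has support interval [−r0−2t, r0+2t−2], i.e., centered at −1 with support radius r0 + 2t − 1. -/

import Mathlib

/-! The lowest and highest coefficients of `S(z²)·E₀(z)` are the products of those of `S(z²)`
and `E₀`: in a linear order with strictly monotone addition, an extreme exponent of a product
is reached by a single pair of exponents. So this product has support interval
`[-r₀ - 2t, r₀ + 2t - 2]`, and the bound on `r₁` puts the support of `E₁` strictly inside it,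
so adding `E₁` cannot touch the two endpoint coefficients. -/

noncomputable section

/-- FIR filters: Laurent polynomials over ℝ, `F(z) = Σ f(n) z^{-n}`,
represented by their coefficient function `n ↦ f n`; multiplication is convolution. -/
abbrev Filt := AddMonoidAlgebra ℝ ℤ

/-- `SuppInt f a b` : the support interval of `f` is `[a,b]` (so `f` is a
nonzero FIR filter with `f a, f b ≠ 0` and all support in `[a,b]`). -/
def SuppInt (f : Filt) (a b : ℤ) : Prop :=
  f.coeff a ≠ 0 ∧ f.coeff b ≠ 0 ∧ ∀ n, f.coeff n ≠ 0 → a ≤ n ∧ n ≤ b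

/-- Upsampling: `F(z) ↦ F(z²)`, i.e. `Σ f(n) z^{-2n}`. -/
def up (f : Filt) : Filt := AddMonoidAlgebra.ofCoeff (Finsupp.mapDomain (fun n : ℤ => 2 * n) f.coeff)

namespace AddMonoidAlgebra

variable {R A : Type*} [Semiring R] [Add A] [LinearOrder A] [AddLeftStrictMono A]
  [AddRightStrictMono A] {f g : AddMonoidAlgebra R A} {a b : A}

theorem coeff_mul_add_of_forall_le (hf : ∀ n, f.coeff n ≠ 0 → n ≤ a)
    (hg : ∀ n, g.coeff n ≠ 0 → n ≤ b) :
    (f * g).coeff (a + b) = f.coeff a * g.coeff b :=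
  coeff_mul_add_of_uniqueAdd fun _ _ hx hy h =>
    (add_eq_add_iff_eq_and_eq (hf _ (Finsupp.mem_support_iff.1 hx))
      (hg _ (Finsupp.mem_support_iff.1 hy))).1 h

theorem coeff_mul_add_of_forall_ge (hf : ∀ n, f.coeff n ≠ 0 → a ≤ n)
    (hg : ∀ n, g.coeff n ≠ 0 → b ≤ n) :
    (f * g).coeff (a + b) = f.coeff a * g.coeff b :=
  coeff_mul_add_of_forall_le (A := Aᵒᵈ) hf hg

end AddMonoidAlgebra

theorem up_coeff_two_mul (f : Filt) (n : ℤ) : (up f).coeff (2 * n) = f.coeff n :=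
  Finsupp.mapDomain_apply (mul_right_injective₀ two_ne_zero) f.coeff n

theorem exists_eq_two_mul_of_up_coeff_ne_zero {f : Filt} {m : ℤ} (h : (up f).coeff m ≠ 0) :
    ∃ k, m = 2 * k ∧ f.coeff k ≠ 0 := by
  obtain ⟨k, rfl⟩ := Finsupp.mem_range_of_mapDomain_ne_zero h
  exact ⟨k, rfl, by rwa [up_coeff_two_mul] at h⟩

namespace SuppInt

variable {f g : Filt} {a b c d : ℤ}

theorem up (hf : SuppInt f a b) : SuppInt (up f) (2 * a) (2 * b) := by
  obtain ⟨ha, hb, hsupp⟩ := hf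
  refine ⟨by rwa [up_coeff_two_mul], by rwa [up_coeff_two_mul], fun m hm => ?_⟩
  obtain ⟨k, rfl, hk⟩ := exists_eq_two_mul_of_up_coeff_ne_zero hm
  have := hsupp k hk
  omega

theorem mul (hf : SuppInt f a b) (hg : SuppInt g c d) : SuppInt (f * g) (a + c) (b + d) := by
  obtain ⟨hfa, hfb, hfs⟩ := hf
  obtain ⟨hgc, hgd, hgs⟩ := hg
  refine ⟨?_, ?_, fun n hn => ?_⟩
  · rw [AddMonoidAlgebra.coeff_mul_add_of_forall_ge (fun n hn => (hfs n hn).1)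
      (fun n hn => (hgs n hn).1)]
    exact mul_ne_zero hfa hgc
  · rw [AddMonoidAlgebra.coeff_mul_add_of_forall_le (fun n hn => (hfs n hn).2)
      (fun n hn => (hgs n hn).2)]
    exact mul_ne_zero hfb hgd
  · obtain ⟨i, hi, j, hj, rfl⟩ := Finset.mem_add.1 <|
      AddMonoidAlgebra.support_coeff_mul_subset f g (Finsupp.mem_support_iff.2 hn)
    have := hfs i (Finsupp.mem_support_iff.1 hi)
    have := hgs j (Finsupp.mem_support_iff.1 hj)
    omega

theorem add_left (hf : SuppInt f a b) (hg : ∀ n, g.coeff n ≠ 0 → a < n ∧ n < b) :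
    SuppInt (g + f) a b := by
  obtain ⟨ha, hb, hfs⟩ := hf
  have hg0 : ∀ n, ¬(a < n ∧ n < b) → g.coeff n = 0 := fun n hn => not_imp_comm.1 (hg n) hn
  simp only [SuppInt, AddMonoidAlgebra.coeff_add, Finsupp.add_apply]
  refine ⟨by rwa [hg0 a (by omega), zero_add], by rwa [hg0 b (by omega), zero_add], fun n hn => ?_⟩
  by_cases hgn : g.coeff n = 0
  · exact hfs n (by rwa [hgn, zero_add] at hn)
  · have := hg n hgn
    omega

end SuppInt

theorem ws_highpass_lift_suppInt_general (E0 E1 S : Filt) (r0 r1 t : ℤ)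
    (h0 : SuppInt E0 (-r0) r0) (h1 : SuppInt E1 (-r1 - 1) (r1 - 1))
    (hS : SuppInt S (-t) (t - 1)) (hle : r1 ≤ r0 + 2 * t - 2) :
    SuppInt (E1 + up S * E0) (-r0 - 2 * t) (r0 + 2 * t - 2) := by
  have hprod := hS.up.mul h0
  rw [show 2 * -t + -r0 = -r0 - 2 * t by ring, show 2 * (t - 1) + r0 = r0 + 2 * t - 2 by ring]
    at hprod
  refine hprod.add_left fun n hn => ?_
  have := h1.2.2 n hn
  omega

/-- the highpass WS lifting update `E₁'(z) = E₁(z) + S(z²) E₀(z)`. -/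
theorem ws_highpass_lift_suppInt (E0 E1 S : Filt) (r0 r1 t : ℤ) (ht : 1 ≤ t)
    (h0 : SuppInt E0 (-r0) r0) (h1 : SuppInt E1 (-r1 - 1) (r1 - 1))
    (hS : SuppInt S (-t) (t - 1)) (hle : r1 ≤ r0 + 2 * t - 2) :
    SuppInt (E1 + up S * E0) (-r0 - 2 * t) (r0 + 2 * t - 2) :=
  ws_highpass_lift_suppInt_general E0 E1 S r0 r1 t h0 h1 hS hle
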